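/- Let 𝐖 be the flipping group of type D_n (n ≥ 4), Z the 𝐖-invariant subspace spanned by ō_1,…,ō_{n−1}, and β : 𝐖 → S_n the induced permutation action on {ō_1,…,ō_n}. The map δ(G) = (ō_{n+1} + G ō_{n+1}, β(G)) is an injective group homomorphism from 𝐖 into the semidirect product Z ⋊_θ S_n, where θ : S_n → Aut(Z) is the homomorphism with γ = θ ∘ β (γ(G) acting on Z by left multiplication by G). -/

import Mathlib

open Matrix

open scoped Classical in
/-- The flipping matrix of a vertex `s` of a simple graph: `(flipMat G s) u v = 1` iff
`u = v`, or (`v = s` and `uv` is an edge). -/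
noncomputable def flipMat {V : Type*} [Fintype V] (G : SimpleGraph V) (s : V) :
    Matrix V V (ZMod 2) :=
  Matrix.of fun u v => if u = v ∨ (v = s ∧ G.Adj u v) then 1 else 0

/-- The flipping group of a simple graph: the subgroup of `GL_n(F_2)` generated by the
flipping matrices of the vertices. -/
noncomputable def flipGroup {V : Type*} [Fintype V] [DecidableEq V] (G : SimpleGraph V) :
    Subgroup (GL V (ZMod 2)) :=
  Subgroup.closure {g : GL V (ZMod 2) | ∃ s : V, (g : Matrix V V (ZMod 2)) = flipMat G s}

/-- The Coxeter graph of type `Dₙ`, with vertices `0, 1, …, n-1` (vertex `i` standing for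
`s_{i+1}`): a path on `0, …, n-2` together with the vertex `n-1` joined to `n-3`. -/
def dG (n : ℕ) : SimpleGraph (Fin n) :=
  SimpleGraph.fromRel
    (fun i j => (i.val + 1 = j.val ∧ j.val ≤ n - 2) ∨ (i.val = n - 3 ∧ j.val = n - 1))

/-- For the flipping group `𝐖` of type `Dₙ` (`n ≥ 4`), the map
`δ(G) = (ō_{n+1} + G ō_{n+1}, β(G))` is an injective homomorphism of `𝐖` into the
semidirect product `Z ⋊_θ S_n`, where `v j = ō_{j+1}` enumerates `{ō_1, …, ō_n}`,
`β` is the induced permutation action of `𝐖` on `{ō_1, …, ō_n}`, `Z` is the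
`𝐖`-invariant subspace spanned by `ō_1, …, ō_{n-1}`, and `θ : S_n → Aut(Z)` satisfies
`γ = θ ∘ β` (with `γ(G)` acting on `Z` by left multiplication by `G`). -/
theorem dG_semidirect (n : ℕ) (hn : 4 ≤ n)
    (v : Fin n → (Fin n → ZMod 2))
    (hv0 : v ⟨0, by omega⟩ = Pi.single (⟨0, by omega⟩ : Fin n) 1)
    (hvmid : ∀ (k : Fin n) (_h1 : 1 ≤ k.val) (_h2 : k.val ≤ n - 3),
      v k = Pi.single (⟨k.val - 1, by omega⟩ : Fin n) 1 + Pi.single k 1)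
    (hvpen : v ⟨n - 2, by omega⟩ = Pi.single (⟨n - 3, by omega⟩ : Fin n) 1 +
      Pi.single (⟨n - 2, by omega⟩ : Fin n) 1 + Pi.single (⟨n - 1, by omega⟩ : Fin n) 1)
    (hvlast : v ⟨n - 1, by omega⟩ = Pi.single (⟨n - 2, by omega⟩ : Fin n) 1 +
      Pi.single (⟨n - 1, by omega⟩ : Fin n) 1)
    (Z : Submodule (ZMod 2) (Fin n → ZMod 2))
    (hZ : Z = Submodule.span (ZMod 2) (v '' {k : Fin n | k.val ≤ n - 2}))
    (β : flipGroup (dG n) →* Equiv.Perm (Fin n))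
    (hβ : ∀ (g : flipGroup (dG n)) (j : Fin n),
      ((g : GL (Fin n) (ZMod 2)) : Matrix (Fin n) (Fin n) (ZMod 2)).mulVec (v j)
        = v (β g j))
    (θ : Equiv.Perm (Fin n) →* MulAut (Multiplicative ↥Z))
    (hθ : ∀ (g : flipGroup (dG n)) (z : ↥Z),
      (↑(Multiplicative.toAdd (θ (β g) (Multiplicative.ofAdd z))) : Fin n → ZMod 2)
        = ((g : GL (Fin n) (ZMod 2)) : Matrix (Fin n) (Fin n) (ZMod 2)).mulVec ↑z) :
    ∃ δ : flipGroup (dG n) →* Multiplicative ↥Z ⋊[θ] Equiv.Perm (Fin n),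
      Function.Injective δ ∧
      ∀ g : flipGroup (dG n),
        (↑(Multiplicative.toAdd (δ g).left) : Fin n → ZMod 2)
          = Pi.single (⟨n - 1, by omega⟩ : Fin n) 1 +
            ((g : GL (Fin n) (ZMod 2)) : Matrix (Fin n) (Fin n) (ZMod 2)).mulVec
              (Pi.single (⟨n - 1, by omega⟩ : Fin n) 1) ∧
        (δ g).right = β g := by

  have hn1 : n - 1 < n := by omega
  have hn2 : n - 2 < n := by omega
  have hn3 : n - 3 < n := by omega
  set e : Fin n → ZMod 2 := Pi.single (⟨n - 1, hn1⟩ : Fin n) 1 with he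
  have haa : ∀ x : Fin n → ZMod 2, x + x = 0 := fun x => by
    funext i; exact CharTwo.add_self_eq_zero _
  have ha2 : ∀ a b : Fin n → ZMod 2, a + (a + b) = b := fun a b => by
    rw [← add_assoc, haa, zero_add]
  have hab2 : ∀ a b : Fin n → ZMod 2, (a + b) + b = a := fun a b => by
    rw [add_assoc, haa, add_zero]
  have hcollapse : ∀ a b c : Fin n → ZMod 2, (a + b) + (b + c) = a + c := fun a b c => by
    rw [add_assoc, ha2]
  have hZext : ∀ a b : Multiplicative ↥Z,
      ((Multiplicative.toAdd a : Z) : Fin n → ZMod 2)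
        = ((Multiplicative.toAdd b : Z) : Fin n → ZMod 2) → a = b := fun a b h =>
    Multiplicative.toAdd.injective (Subtype.ext h)
  -- basis vectors with index ≤ n - 3 lie in Z
  have hsingle : ∀ j : ℕ, ∀ _hj : j ≤ n - 3, Pi.single (⟨j, by omega⟩ : Fin n) 1 ∈ Z := by
    intro j
    induction j with
    | zero =>
      intro _
      have hv : v ⟨0, by omega⟩ ∈ Z := by
        rw [hZ]
        exact Submodule.subset_span ⟨⟨0, by omega⟩, show (0 : ℕ) ≤ n - 2 by omega, rfl⟩
      rwa [hv0] at hv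
    | succ k ih =>
      intro hj
      have hvk := hvmid ⟨k + 1, by omega⟩ (by exact Nat.le_add_left 1 k) (by exact hj)
      simp only [Nat.add_sub_cancel] at hvk
      have hv : v ⟨k + 1, by omega⟩ ∈ Z := by
        rw [hZ]
        exact Submodule.subset_span ⟨⟨k + 1, by omega⟩, show k + 1 ≤ n - 2 by omega, rfl⟩
      have hkey : Pi.single (⟨k + 1, by omega⟩ : Fin n) 1
          = v ⟨k + 1, by omega⟩ + Pi.single (⟨k, by omega⟩ : Fin n) 1 := by
        rw [hvk, add_comm (Pi.single (⟨k, by omega⟩ : Fin n) 1), hab2]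
      rw [hkey]
      exact Z.add_mem hv (ih (by omega))
  -- Z is invariant
  have hInv : ∀ (g : flipGroup (dG n)) (x : Fin n → ZMod 2), x ∈ Z →
      ((g : GL (Fin n) (ZMod 2)) : Matrix (Fin n) (Fin n) (ZMod 2)) *ᵥ x ∈ Z := by
    intro g x hx
    rw [← hθ g ⟨x, hx⟩]
    exact (Multiplicative.toAdd (θ (β g) (Multiplicative.ofAdd (⟨x, hx⟩ : Z)))).2
  -- adjacency with the last vertex
  have hadj : ∀ u : Fin n, (dG n).Adj u ⟨n - 1, hn1⟩ ↔ u.val = n - 3 := by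
    intro u
    have hu := u.isLt
    simp only [dG, SimpleGraph.fromRel_adj, ne_eq, Fin.ext_iff, and_true]
    omega
  -- action of generators on e
  have hflipe : ∀ s : Fin n, flipMat (dG n) s *ᵥ e
      = e + (if s = ⟨n - 1, hn1⟩ then Pi.single (⟨n - 3, hn3⟩ : Fin n) 1 else 0) := by
    intro s
    rw [he, Matrix.mulVec_single_one]
    funext u
    have hu := u.isLt
    have hsl := s.isLt
    simp only [flipMat, Matrix.of_apply, mul_one, Pi.add_apply,
      apply_ite (fun f : Fin n → ZMod 2 => f u), Pi.zero_apply, Pi.single_apply,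
      hadj u, Fin.ext_iff, and_true, Matrix.col_apply]
    split_ifs <;> first | rfl | (exfalso; omega) | decide
  -- the translation part lands in Z
  have hmem : ∀ (x : GL (Fin n) (ZMod 2)), x ∈ flipGroup (dG n) →
      e + (x : Matrix (Fin n) (Fin n) (ZMod 2)) *ᵥ e ∈ Z := by
    intro x hx
    induction hx using Subgroup.closure_induction with
    | mem x hx =>
      obtain ⟨s, hs⟩ := hx
      rw [hs, hflipe, ha2]
      split_ifs
      · exact hsingle (n - 3) le_rfl
      · exact Z.zero_mem
    | one =>
      rw [Units.val_one, Matrix.one_mulVec, haa]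
      exact Z.zero_mem
    | mul x y hxm hym hx hy =>
      have key : e + ((x * y : GL (Fin n) (ZMod 2)) : Matrix (Fin n) (Fin n) (ZMod 2)) *ᵥ e
          = (e + (x : Matrix (Fin n) (Fin n) (ZMod 2)) *ᵥ e)
            + (x : Matrix (Fin n) (Fin n) (ZMod 2)) *ᵥ
              (e + (y : Matrix (Fin n) (Fin n) (ZMod 2)) *ᵥ e) := by
        rw [Matrix.mulVec_add, Units.val_mul, ← Matrix.mulVec_mulVec, hcollapse]
      rw [key]
      exact Z.add_mem hx (hInv ⟨x, hxm⟩ _ hy)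
    | inv x hxm hx =>
      have key : e + ((x⁻¹ : GL (Fin n) (ZMod 2)) : Matrix (Fin n) (Fin n) (ZMod 2)) *ᵥ e
          = ((x⁻¹ : GL (Fin n) (ZMod 2)) : Matrix (Fin n) (Fin n) (ZMod 2)) *ᵥ
            (e + (x : Matrix (Fin n) (Fin n) (ZMod 2)) *ᵥ e) := by
        rw [Matrix.mulVec_add, Matrix.mulVec_mulVec, ← Units.val_mul, inv_mul_cancel,
          Units.val_one, Matrix.one_mulVec, add_comm]
      rw [key]
      exact hInv ⟨x⁻¹, inv_mem hxm⟩ _ hx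
  -- the homomorphism
  refine ⟨MonoidHom.mk' (fun g =>
      ⟨Multiplicative.ofAdd
        ⟨e + ((g : GL (Fin n) (ZMod 2)) : Matrix (Fin n) (Fin n) (ZMod 2)) *ᵥ e,
          hmem _ g.2⟩, β g⟩) ?_, ?_, fun g => ⟨rfl, rfl⟩⟩
  · intro g h
    refine SemidirectProduct.ext ?_ (map_mul β g h)
    have key : e + (((g * h : flipGroup (dG n)) : GL (Fin n) (ZMod 2))
          : Matrix (Fin n) (Fin n) (ZMod 2)) *ᵥ e
        = (e + ((g : GL (Fin n) (ZMod 2)) : Matrix (Fin n) (Fin n) (ZMod 2)) *ᵥ e)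
          + ((g : GL (Fin n) (ZMod 2)) : Matrix (Fin n) (Fin n) (ZMod 2)) *ᵥ
            (e + ((h : GL (Fin n) (ZMod 2)) : Matrix (Fin n) (Fin n) (ZMod 2)) *ᵥ e) := by
      have hco : ((g * h : flipGroup (dG n)) : GL (Fin n) (ZMod 2))
          = (g : GL (Fin n) (ZMod 2)) * (h : GL (Fin n) (ZMod 2)) := rfl
      rw [hco, Units.val_mul, ← Matrix.mulVec_mulVec, Matrix.mulVec_add, hcollapse]
    have hr := hθ g ⟨e + ((h : GL (Fin n) (ZMod 2)) : Matrix (Fin n) (Fin n) (ZMod 2)) *ᵥ e,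
      hmem _ h.2⟩
    apply hZext
    show e + (((g * h : flipGroup (dG n)) : GL (Fin n) (ZMod 2))
        : Matrix (Fin n) (Fin n) (ZMod 2)) *ᵥ e
      = (e + ((g : GL (Fin n) (ZMod 2)) : Matrix (Fin n) (Fin n) (ZMod 2)) *ᵥ e)
        + ((Multiplicative.toAdd (θ (β g) (Multiplicative.ofAdd
            (⟨e + ((h : GL (Fin n) (ZMod 2)) : Matrix (Fin n) (Fin n) (ZMod 2)) *ᵥ e,
              hmem _ h.2⟩ : Z))) : Z) : Fin n → ZMod 2)
    rw [hr]
    exact key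
  · -- injectivity
    rw [injective_iff_map_eq_one]
    intro g hg
    have hright : β g = 1 := congrArg SemidirectProduct.right hg
    have hleft := congrArg
      (fun t : Multiplicative ↥Z ⋊[θ] Equiv.Perm (Fin n) =>
        ((Multiplicative.toAdd (SemidirectProduct.left t) : Z) : Fin n → ZMod 2)) hg
    have h0 : e + ((g : GL (Fin n) (ZMod 2)) : Matrix (Fin n) (Fin n) (ZMod 2)) *ᵥ e = 0 :=
      hleft
    have hge : ((g : GL (Fin n) (ZMod 2)) : Matrix (Fin n) (Fin n) (ZMod 2)) *ᵥ e = e := by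
      have h1 := congrArg (fun t => e + t) h0
      rw [ha2] at h1
      rw [h1, add_zero]
    have hfixv : ∀ j : Fin n,
        ((g : GL (Fin n) (ZMod 2)) : Matrix (Fin n) (Fin n) (ZMod 2)) *ᵥ v j = v j := by
      intro j
      rw [hβ g j, hright]
      rfl
    have hfixlow : ∀ j : ℕ, ∀ _hj : j ≤ n - 3,
        ((g : GL (Fin n) (ZMod 2)) : Matrix (Fin n) (Fin n) (ZMod 2)) *ᵥ
          Pi.single (⟨j, by omega⟩ : Fin n) 1 = Pi.single (⟨j, by omega⟩ : Fin n) 1 := by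
      intro j
      induction j with
      | zero =>
        intro _
        have h2 := hfixv ⟨0, by omega⟩
        rwa [hv0] at h2
      | succ k ih =>
        intro hj
        have hvk := hvmid ⟨k + 1, by omega⟩ (by exact Nat.le_add_left 1 k) (by exact hj)
        simp only [Nat.add_sub_cancel] at hvk
        have hkey : Pi.single (⟨k + 1, by omega⟩ : Fin n) 1
            = v ⟨k + 1, by omega⟩ + Pi.single (⟨k, by omega⟩ : Fin n) 1 := by
          rw [hvk, add_comm (Pi.single (⟨k, by omega⟩ : Fin n) 1), hab2]
        rw [hkey, Matrix.mulVec_add, hfixv, ih (by omega)]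
    have hfixpen : ((g : GL (Fin n) (ZMod 2)) : Matrix (Fin n) (Fin n) (ZMod 2)) *ᵥ
        Pi.single (⟨n - 2, hn2⟩ : Fin n) 1 = Pi.single (⟨n - 2, hn2⟩ : Fin n) 1 := by
      have hkey : Pi.single (⟨n - 2, hn2⟩ : Fin n) 1 = v ⟨n - 1, hn1⟩ + e := by
        rw [hvlast, he, hab2]
      rw [hkey, Matrix.mulVec_add, hfixv, hge]
    have hfix : ∀ j : Fin n,
        ((g : GL (Fin n) (ZMod 2)) : Matrix (Fin n) (Fin n) (ZMod 2)) *ᵥ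
          Pi.single j 1 = Pi.single j 1 := by
      intro j
      have hjlt := j.isLt
      by_cases hj3 : j.val ≤ n - 3
      · have h2 := hfixlow j.val hj3
        have hj : (⟨j.val, by omega⟩ : Fin n) = j := rfl
        rwa [hj] at h2
      · by_cases hj2 : j.val = n - 2
        · have hj : (⟨n - 2, hn2⟩ : Fin n) = j := Fin.ext (by simp [← hj2])
          rwa [hj] at hfixpen
        · have hj1 : j.val = n - 1 := by omega
          have hj : (⟨n - 1, hn1⟩ : Fin n) = j := Fin.ext (by simp [← hj1])
          rw [← hj, ← he]
          exact hge
    have hmat : ((g : GL (Fin n) (ZMod 2)) : Matrix (Fin n) (Fin n) (ZMod 2)) = 1 := by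
      ext i j
      have h1 := hfix j
      rw [Matrix.mulVec_single_one] at h1
      have h2 := congrFun h1 i
      simp only [mul_one, Pi.single_apply, Matrix.col_apply] at h2
      rw [h2, Matrix.one_apply]
    exact Subtype.ext (Units.ext hmat)
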